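/- For every z ∈ R and every m ≥ 1, the rows g₁,…,g_{m+1} of G_{1,m} satisfy rev(g₁) = g₁ and rev(gᵢ) = g₁ − gᵢ for all 2 ≤ i ≤ m+1, where rev : R^{2^m} → R^{2^m} reverses the order of the coordinates. -/
import Mathlib


open Polynomial

noncomputable section

/-- The ring `R = ℤ₄[u]/(u³ − 1)`. -/
abbrev R : Type := Polynomial (ZMod 4) ⧸ Ideal.span ({Polynomial.X ^ 3 - 1} : Set (Polynomial (ZMod 4)))

/-- The image `u` of the variable in `R`. -/
def u : R := Ideal.Quotient.mk _ Polynomial.X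

instance : DecidableEq R := Classical.decEq R

lemma u_pow_three : u ^ 3 = 1 := by
  have h : (Ideal.Quotient.mk (Ideal.span ({Polynomial.X ^ 3 - 1} : Set (Polynomial (ZMod 4))))
      (Polynomial.X ^ 3 - 1) : R) = 0 :=
    Ideal.Quotient.eq_zero_iff_mem.mpr (Ideal.subset_span rfl)
  have h2 : (u ^ 3 - 1 : R) = 0 := by
    simpa [u, map_sub, map_pow] using h
  linear_combination h2

/-- The ring automorphism `σ` of `R` determined by `σ(u) = u²`. -/
def sigmaR : R →+* R :=
  Ideal.Quotient.lift _ (Polynomial.aeval (u ^ 2)).toRingHom (by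
    intro p hp
    obtain ⟨q, rfl⟩ := Ideal.mem_span_singleton.mp hp
    have h6 : ((u ^ 2) ^ 3 : R) = 1 := by
      rw [← pow_mul]
      have : (u : R) ^ (2 * 3) = (u ^ 3) ^ 2 := by ring
      rw [this, u_pow_three, one_pow]
    simp [map_mul, map_sub, map_pow, h6])

/-- The element `δ = 2 + 2u + 2u²` of `R`. -/
def δR : R := 2 + 2 * u + 2 * u ^ 2

/-- The map `ρ : Rⁿ → Rⁿ`, reversing coordinates and applying `σ` coordinatewise. -/
def ρmap (n : ℕ) (x : Fin n → R) : Fin n → R := fun i => sigmaR (x (Fin.rev i))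

/-- The 4-letter DNA alphabet. -/
inductive DNA : Type
  | A | C | G | T
deriving DecidableEq, Inhabited, Repr

/-- Watson–Crick complement of a DNA nucleotide. -/
def DNA.compl : DNA → DNA
  | .A => .T
  | .T => .A
  | .C => .G
  | .G => .C

/-- Complement of a DNA string. -/
def complStr (s : List DNA) : List DNA := s.map DNA.compl

/-- Reverse of a DNA string. -/
def revStr (s : List DNA) : List DNA := s.reverse

/-- Reverse-complement of a DNA string. -/
def rcStr (s : List DNA) : List DNA := s.reverse.map DNA.compl

/-- Hamming distance between two DNA strings (of equal length). -/
def dH (s t : List DNA) : ℕ := ((s.zip t).filter fun p => p.1 ≠ p.2).length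

/-- GC-content of a DNA string: the number of positions carrying `G` or `C`. -/
def gcContent (s : List DNA) : ℕ := (s.filter fun d => d = DNA.G ∨ d = DNA.C).length

/-- A DNA string has no homopolymer run of length greater than `2` iff it has no three
consecutive equal symbols. -/
def NoHomopolymer3 (s : List DNA) : Prop := ¬ ∃ (l r : List DNA) (a : DNA), s = l ++ [a, a, a] ++ r

/-- Blockwise extension of a map `ψ : R → Σ³` to vectors over `R`, by concatenation. -/
def Ψ (ψ : R → List DNA) {n : ℕ} (x : Fin n → R) : List DNA := (List.ofFn x).flatMap ψ

/-- The map `ψ₂` from the ideal `2R` to DNA strings of length `3`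
(the restriction of the DNA map of Table I to `2R`; its value outside `2R` is irrelevant). -/
def ψ₂ (x : R) : List DNA :=
  if x = 0 then [.G, .A, .G]
  else if x = 2 then [.C, .G, .A]
  else if x = 2 * u then [.G, .T, .G]
  else if x = 2 * u ^ 2 then [.A, .G, .C]
  else if x = 2 + 2 * u then [.T, .C, .G]
  else if x = 2 + 2 * u ^ 2 then [.C, .A, .C]
  else if x = 2 * u + 2 * u ^ 2 then [.G, .C, .T]
  else [.C, .T, .C]

/-- The rows of the Reed–Muller type generator matrix `G_{1,m}` over `R` (with parameter `z`):
`Gmat z m i j` is the entry of `G_{1,m}` in row `i` and column `j`.  Here `G_{1,0} = [z]` and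
`G_{1,m+1} = [[G_{1,m}, G_{1,m}], [0 … 0, z … z]]`, which for `m = 1` gives
`G_{1,1} = [[z,z],[0,z]]`. -/
def Gmat (z : R) : (m : ℕ) → Fin (m + 1) → Fin (2 ^ m) → R
  | 0, _, _ => z
  | m + 1, i, j =>
    if hi : (i : ℕ) < m + 1 then
      Gmat z m ⟨i, hi⟩ ⟨(j : ℕ) % 2 ^ m, Nat.mod_lt _ (Nat.two_pow_pos m)⟩
    else if (j : ℕ) < 2 ^ m then 0 else z

/-- The Reed–Muller type code `R(1,m)`: the `R`-submodule of `R^{2^m}` generated by the rows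
of `G_{1,m}`. -/
def RM (z : R) (m : ℕ) : Submodule R (Fin (2 ^ m) → R) := Submodule.span R (Set.range (Gmat z m))

/-- Hamming weight of a vector over `R`. -/
def wt {N : ℕ} (c : Fin N → R) : ℕ := (Finset.univ.filter fun j => c j ≠ 0).card

/-- Hamming distance between two vectors over `R`. -/
def hdistR {N : ℕ} (c c' : Fin N → R) : ℕ := (Finset.univ.filter fun j => c j ≠ c' j).card

/-- Coordinate reversal of a vector over `R`. -/
def revVec {N : ℕ} (c : Fin N → R) : Fin N → R := fun j => c (Fin.rev j)

/-- `a + bu + cu²` as an element of `R`, for `a, b, c ∈ ℤ₄`. -/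
def toR (a b c : ZMod 4) : R :=
  algebraMap (ZMod 4) R a + algebraMap (ZMod 4) R b * u + algebraMap (ZMod 4) R c * u ^ 2

end

lemma gmat_zero (z : R) : ∀ (m : ℕ) (j : Fin (2 ^ m)), Gmat z m 0 j = z
  | 0, j => rfl
  | m + 1, j => by
    have h : ((0 : Fin (m + 2)) : ℕ) < m + 1 := by simp
    simp only [Gmat, h, dif_pos]
    exact gmat_zero z m _

lemma gmat_rev (z : R) : ∀ (m : ℕ) (i : Fin (m + 1)), i ≠ 0 → ∀ j : Fin (2 ^ m),
    Gmat z m i (Fin.rev j) + Gmat z m i j = z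
  | 0, i, hi, j => by
    have h0 : (i : ℕ) = 0 := by have := i.isLt; omega
    exact absurd (Fin.ext (by simp [h0])) hi
  | m + 1, i, hi, j => by
    have hk : 0 < 2 ^ m := Nat.two_pow_pos m
    have hpow : (2 : ℕ) ^ (m + 1) = 2 * 2 ^ m := by ring
    have hj2 : (j : ℕ) < 2 * 2 ^ m := by have := j.isLt; omega
    have hrev : ((Fin.rev j : Fin (2 ^ (m + 1))) : ℕ) = 2 * 2 ^ m - ((j : ℕ) + 1) := by
      rw [Fin.val_rev]; omega
    by_cases hlt : (i : ℕ) < m + 1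
    · simp only [Gmat, hlt, dif_pos]
      have hmod : ((Fin.rev j : Fin (2 ^ (m + 1))) : ℕ) % 2 ^ m
          = 2 ^ m - ((j : ℕ) % 2 ^ m + 1) := by
        rw [hrev]
        rcases Nat.lt_or_ge (j : ℕ) (2 ^ m) with h | h
        · rw [Nat.mod_eq_of_lt h]
          have he : 2 * 2 ^ m - ((j : ℕ) + 1) = 2 ^ m + (2 ^ m - ((j : ℕ) + 1)) := by omega
          rw [he, Nat.add_mod_left, Nat.mod_eq_of_lt (by omega)]
        · have hje : (j : ℕ) % 2 ^ m = (j : ℕ) - 2 ^ m := by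
            rw [Nat.mod_eq_sub_mod h, Nat.mod_eq_of_lt (by omega)]
          rw [hje, Nat.mod_eq_of_lt (by omega)]
          omega
      have harg : (⟨((Fin.rev j : Fin (2 ^ (m + 1))) : ℕ) % 2 ^ m,
            Nat.mod_lt _ (Nat.two_pow_pos m)⟩ : Fin (2 ^ m))
          = Fin.rev ⟨(j : ℕ) % 2 ^ m, Nat.mod_lt _ (Nat.two_pow_pos m)⟩ := by
        apply Fin.ext
        rw [Fin.val_rev]
        exact hmod
      rw [harg]
      have hine : (⟨(i : ℕ), hlt⟩ : Fin (m + 1)) ≠ 0 := by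
        intro h
        apply hi
        apply Fin.ext
        simpa using congrArg Fin.val h
      exact gmat_rev z m ⟨(i : ℕ), hlt⟩ hine ⟨(j : ℕ) % 2 ^ m, Nat.mod_lt _ (Nat.two_pow_pos m)⟩
    · simp only [Gmat, hlt, dif_neg, not_false_iff, Fin.val_rev]
      by_cases h : (j : ℕ) < 2 ^ m
      · rw [if_neg (by omega), if_pos h]; simp
      · rw [if_pos (by omega), if_neg h]; simp

/-- For every `z ∈ R` and `m ≥ 1`, the rows of `G_{1,m}` satisfy `rev(g₁) = g₁` and
`rev(gᵢ) = g₁ − gᵢ` for all the remaining rows. -/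
theorem stmt12 (z : R) (m : ℕ) (hm : 1 ≤ m) :
    revVec (Gmat z m 0) = Gmat z m 0 ∧
    (∀ i : Fin (m + 1), i ≠ 0 → revVec (Gmat z m i) = Gmat z m 0 - Gmat z m i) := by
  constructor
  · funext j
    simp only [revVec, gmat_zero]
  · intro i hi
    funext j
    have h := gmat_rev z m i hi j
    simp only [revVec, Pi.sub_apply, gmat_zero]
    linear_combination h
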